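/- arXiv:2012.10933 — 2 statements merged into one kernel-verified Lean document; each statement's English description precedes it below -/
import Mathlib

section
/- Let G be a connected simple graph on at least 2 vertices whose eccentricity matrix ε(G) has at most one positive eigenvalue. Then G has radius 1, i.e., G has a vertex adjacent to all other vertices. -/
open Finset Polynomial

noncomputable def ecc {V : Type*} [Fintype V] (G : SimpleGraph V) (u : V) : ℕ :=
  Finset.univ.sup (G.dist u)

noncomputable def eccMatrix {V : Type*} [Fintype V] (G : SimpleGraph V) :
    Matrix V V ℝ := fun u v =>
  if G.dist u v = min (ecc G u) (ecc G v) then (G.dist u v : ℝ) else 0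

theorem eccMatrix_isHermitian {V : Type*} [Fintype V] (G : SimpleGraph V) :
    (eccMatrix G).IsHermitian := by
  unfold Matrix.IsHermitian
  ext u v
  simp only [Matrix.conjTranspose_apply, eccMatrix, star_trivial]
  rw [SimpleGraph.dist_comm, min_comm]

/-- Number of positive eigenvalues (with multiplicity) of a real symmetric matrix. -/
noncomputable def posEigCount {V : Type*} [Fintype V] [DecidableEq V]
    {A : Matrix V V ℝ} (hA : A.IsHermitian) : ℕ :=
  (Finset.univ.filter fun i => 0 < hA.eigenvalues i).card

/-- The join of two simple graphs: disjoint union plus all edges in between. -/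
def graphJoin {α β : Type*} (G : SimpleGraph α) (H : SimpleGraph β) :
    SimpleGraph (α ⊕ β) where
  Adj x y := match x, y with
    | Sum.inl a, Sum.inl b => G.Adj a b
    | Sum.inr a, Sum.inr b => H.Adj a b
    | _, _ => True
  symm := ⟨by rintro (a|a) (b|b) h <;> first | exact G.adj_symm h | exact H.adj_symm h | trivial⟩
  loopless := ⟨by rintro (a|a) h <;> first | exact G.irrefl h | exact H.irrefl h⟩

/-- The disjoint union of two simple graphs. -/
def graphSum {α β : Type*} (G : SimpleGraph α) (H : SimpleGraph β) :
    SimpleGraph (α ⊕ β) where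
  Adj x y := match x, y with
    | Sum.inl a, Sum.inl b => G.Adj a b
    | Sum.inr a, Sum.inr b => H.Adj a b
    | _, _ => False
  symm := ⟨by rintro (a|a) (b|b) h <;> first | exact G.adj_symm h | exact H.adj_symm h | trivial⟩
  loopless := ⟨by rintro (a|a) h <;> first | exact G.irrefl h | exact H.irrefl h⟩

/-- Disjoint union of blocks indexed by `ι`; block `i` has `r i` vertices and is a
clique when `P i` holds and a coclique (independent set) otherwise. -/
def blocksGraph {ι : Type*} (r : ι → ℕ) (P : ι → Prop) :
    SimpleGraph (Σ i, Fin (r i)) where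
  Adj x y := x ≠ y ∧ x.1 = y.1 ∧ P x.1
  symm := ⟨by rintro x y ⟨h1, h2, h3⟩; exact ⟨h1.symm, h2.symm, h2 ▸ h3⟩⟩
  loopless := ⟨fun x h => h.1 rfl⟩

/-!
If `G` has no dominating vertex, every eccentricity is at least `2`. Take a centre `u`, a vertex
`v` with `d(u, v) = e(u)`, and the neighbour `z` of `u` on a geodesic to `v`. Then
`ε(u, v) = e(u) > 0`, while `ε(z, u) = ε(z, v) = 0` because `d(z, u) = 1` and
`d(z, v) = e(u) - 1` are smaller than every eccentricity. For a vertex `t` with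
`d(z, t) = e(z)`, the quadratic form of `ε(G)` is positive definite on the span of `e_u + e_v` and
`e_z + s e_t` for small `s > 0`, which forces two positive eigenvalues.
-/

open Matrix

namespace Matrix.IsHermitian

variable {V : Type*} [Fintype V] [DecidableEq V] {A : Matrix V V ℝ}

lemma dotProduct_mulVec_eq_sum_eigenvalues (hA : A.IsHermitian) (x : V → ℝ) :
    x ⬝ᵥ A *ᵥ x =
      ∑ i, hA.eigenvalues i * (((hA.eigenvectorUnitary : Matrix V V ℝ)ᵀ *ᵥ x) i) ^ 2 := by
  set U : Matrix V V ℝ := (hA.eigenvectorUnitary : Matrix V V ℝ)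
  have hstar : star U = Uᵀ := by
    ext i j
    simp [Matrix.star_apply]
  have hD : (diagonal (RCLike.ofReal ∘ hA.eigenvalues) : Matrix V V ℝ) =
      diagonal hA.eigenvalues := by
    simp [RCLike.ofReal_real_eq_id]
  conv_lhs => rw [hA.spectral_theorem]
  rw [Unitary.conjStarAlgAut_apply, hstar, hD, ← mulVec_mulVec, ← mulVec_mulVec,
    dotProduct_mulVec, ← mulVec_transpose]
  simp only [dotProduct, mulVec_diagonal]
  exact sum_congr rfl fun i _ => by ring

lemma exists_ne_zero_dotProduct_mulVec_nonpos (hA : A.IsHermitian) {ι : Type*} [Fintype ι]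
    (w : ι → V → ℝ) (hcard : posEigCount hA < Fintype.card ι) :
    ∃ c : ι → ℝ, c ≠ 0 ∧ (∑ i, c i • w i) ⬝ᵥ A *ᵥ (∑ i, c i • w i) ≤ 0 := by
  let f : (ι → ℝ) →ₗ[ℝ] {j // 0 < hA.eigenvalues j} → ℝ :=
    LinearMap.funLeft ℝ ℝ Subtype.val ∘ₗ
      ((hA.eigenvectorUnitary : Matrix V V ℝ)ᵀ).mulVecLin ∘ₗ Fintype.linearCombination ℝ w
  have hrank : Module.finrank ℝ ({j // 0 < hA.eigenvalues j} → ℝ) <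
      Module.finrank ℝ (ι → ℝ) := by
    simpa [posEigCount, Fintype.card_subtype] using hcard
  obtain ⟨c, hker, hc⟩ :=
    Submodule.exists_mem_ne_zero_of_ne_bot (f.ker_ne_bot_of_finrank_lt hrank)
  refine ⟨c, hc, ?_⟩
  rw [hA.dotProduct_mulVec_eq_sum_eigenvalues]
  refine sum_nonpos fun j _ => ?_
  by_cases hj : 0 < hA.eigenvalues j
  · have hcoord := congr_fun (LinearMap.mem_ker.1 hker) ⟨j, hj⟩
    simp only [f, LinearMap.comp_apply, LinearMap.funLeft_apply, mulVecLin_apply,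
      Fintype.linearCombination_apply, Pi.zero_apply] at hcoord
    simp [hcoord]
  · exact mul_nonpos_of_nonpos_of_nonneg (not_lt.1 hj) (sq_nonneg _)

lemma two_le_posEigCount_of_diag_eq_zero (hA : A.IsHermitian) (hdiag : ∀ i, A i i = 0)
    {u v z t : V} (huv : 0 < A u v) (hzt : 0 < A z t) (hzu : A z u = 0) (hzv : A z v = 0) :
    2 ≤ posEigCount hA := by
  have hsymm : ∀ i j, A i j = A j i := fun i j => (hA.apply i j).symm.trans (star_trivial _)
  set a := A u v
  set r := A z t
  set C := A u t + A v t
  -- small enough that the Gram matrix `!![2 a, s C; s C, 2 s r]` of the two test vectors is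
  -- positive definite
  set s : ℝ := a * r / (C ^ 2 + 1)
  have hs : 0 < s := by positivity
  have hsC : s * C ^ 2 < a * r := by
    have : s * (C ^ 2 + 1) = a * r := div_mul_cancel₀ _ (by positivity)
    nlinarith
  have hform : ∀ α β : ℝ,
      (α • (Pi.single u 1 + Pi.single v 1) + β • (Pi.single z 1 + Pi.single t s)) ⬝ᵥ
          A *ᵥ (α • (Pi.single u 1 + Pi.single v 1) + β • (Pi.single z 1 + Pi.single t s)) =
        2 * a * α ^ 2 + 2 * s * r * β ^ 2 + 2 * s * C * (α * β) := by
    intro α β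
    simp only [mulVec_add, mulVec_smul, mulVec_single, dotProduct_add, add_dotProduct,
      smul_dotProduct, dotProduct_smul, single_dotProduct, smul_eq_mul, col_apply,
      MulOpposite.smul_eq_mul_unop, MulOpposite.unop_op, mul_one]
    rw [hdiag u, hdiag v, hdiag z, hdiag t, hsymm v u, hsymm t z, hsymm t u, hsymm t v,
      hsymm u z, hsymm v z, hzu, hzv]
    ring
  by_contra! hlt
  obtain ⟨c, hc, hle⟩ := hA.exists_ne_zero_dotProduct_mulVec_nonpos
    ![Pi.single u 1 + Pi.single v 1, Pi.single z 1 + Pi.single t s] (by simpa using hlt)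
  rw [Fin.sum_univ_two, cons_val_zero, cons_val_one, cons_val_zero,
    hform] at hle
  set α := c 0
  set β := c 1
  have hkey : 2 * a * (2 * a * α ^ 2 + 2 * s * r * β ^ 2 + 2 * s * C * (α * β)) =
      (2 * a * α + s * C * β) ^ 2 + s * (4 * a * r - s * C ^ 2) * β ^ 2 := by ring
  have hdisc : 0 < s * (4 * a * r - s * C ^ 2) := mul_pos hs (by nlinarith)
  have h2a : 2 * a * (2 * a * α ^ 2 + 2 * s * r * β ^ 2 + 2 * s * C * (α * β)) ≤ 0 :=
    mul_nonpos_of_nonneg_of_nonpos (by positivity) hle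
  have hβ : β = 0 := by
    by_contra hβ
    nlinarith [mul_pos hdisc (sq_pos_of_ne_zero hβ), sq_nonneg (2 * a * α + s * C * β)]
  have hα : α = 0 := by
    by_contra hα
    rw [hβ] at hle
    nlinarith [sq_pos_of_ne_zero hα]
  exact hc (funext fun i => by fin_cases i <;> assumption)

end Matrix.IsHermitian

namespace SimpleGraph

variable {V : Type*} [Fintype V] (G : SimpleGraph V)

lemma dist_le_ecc (u v : V) : G.dist u v ≤ ecc G u :=
  le_sup (mem_univ v)

lemma exists_dist_eq_ecc [Nonempty V] (u : V) : ∃ t, G.dist u t = ecc G u := by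
  obtain ⟨t, -, ht⟩ := exists_mem_eq_sup univ univ_nonempty (G.dist u)
  exact ⟨t, ht.symm⟩

lemma two_le_ecc (hconn : G.Connected) {w u : V} (hne : w ≠ u) (hnadj : ¬G.Adj w u) :
    2 ≤ ecc G w :=
  (hconn.one_lt_dist_of_ne_of_not_adj hne hnadj).trans_le (G.dist_le_ecc w u)

lemma eccMatrix_self (u : V) : eccMatrix G u u = 0 := by
  simp [eccMatrix]

lemma eccMatrix_eq_zero_of_dist_lt {u v : V} (h : G.dist u v < min (ecc G u) (ecc G v)) :
    eccMatrix G u v = 0 := by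
  simp [eccMatrix, h.ne]

lemma eccMatrix_pos_of_dist_eq_ecc {u t : V} (h : G.dist u t = ecc G u) (hu : 0 < ecc G u) :
    0 < eccMatrix G u t := by
  have hmin : min (ecc G u) (ecc G t) = ecc G u :=
    min_eq_left (h ▸ G.dist_comm ▸ G.dist_le_ecc t u)
  simpa [eccMatrix, h, hmin] using hu

lemma exists_eccMatrix_pos_pos_zero_zero (hconn : G.Connected) (hecc : ∀ w, 2 ≤ ecc G w) :
    ∃ u v z t : V, 0 < eccMatrix G u v ∧ 0 < eccMatrix G z t ∧
      eccMatrix G z u = 0 ∧ eccMatrix G z v = 0 := by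
  have := hconn.nonempty
  obtain ⟨u, -, hcentre⟩ := univ.exists_min_image (ecc G) univ_nonempty
  obtain ⟨v, huv⟩ := G.exists_dist_eq_ecc u
  obtain ⟨p, hp⟩ := hconn.exists_walk_length_eq_dist u v
  cases p with
  | nil =>
    have := hecc u
    rw [dist_self] at huv
    omega
  | @cons _ z _ hadj q =>
    obtain ⟨t, hzt⟩ := G.exists_dist_eq_ecc z
    have hzu : G.dist z u = 1 := dist_eq_one_iff_adj.2 hadj.symm
    have hzv : G.dist z v < ecc G u := by
      have := G.dist_le q
      simp only [Walk.length_cons] at hp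
      omega
    refine ⟨u, v, z, t, G.eccMatrix_pos_of_dist_eq_ecc huv (by linarith [hecc u]),
      G.eccMatrix_pos_of_dist_eq_ecc hzt (by linarith [hecc z]),
      G.eccMatrix_eq_zero_of_dist_lt ?_, G.eccMatrix_eq_zero_of_dist_lt ?_⟩
    · have := hecc z
      have := hecc u
      omega
    · exact lt_min (hzv.trans_le (hcentre z (mem_univ z)))
        (hzv.trans_le (hcentre v (mem_univ v)))

end SimpleGraph

theorem stmt3_general {V : Type*} [Fintype V] [DecidableEq V] (G : SimpleGraph V)
    (hconn : G.Connected)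
    (hpos : posEigCount (eccMatrix_isHermitian G) ≤ 1) :
    ∃ v : V, ∀ u : V, u ≠ v → G.Adj v u := by
  by_contra! hcon
  have hecc : ∀ w, 2 ≤ ecc G w := fun w => by
    obtain ⟨u, hne, hnadj⟩ := hcon w
    exact G.two_le_ecc hconn hne.symm hnadj
  obtain ⟨u, v, z, t, huv, hzt, hzu, hzv⟩ := G.exists_eccMatrix_pos_pos_zero_zero hconn hecc
  have := (eccMatrix_isHermitian G).two_le_posEigCount_of_diag_eq_zero G.eccMatrix_self
    huv hzt hzu hzv
  omega

/-- a connected graph on at least two vertices whose eccentricity matrix has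
at most one positive eigenvalue has radius 1, i.e. it has a vertex adjacent to all others. -/
theorem stmt3 {V : Type*} [Fintype V] [DecidableEq V] (G : SimpleGraph V)
    (hconn : G.Connected) (hcard : 2 ≤ Fintype.card V)
    (hpos : posEigCount (eccMatrix_isHermitian G) ≤ 1) :
    ∃ v : V, ∀ u : V, u ≠ v → G.Adj v u :=
  stmt3_general G hconn hpos
end

section
/- Let r₁, r₂, r₃ ≥ 1 and let H₁ be the join of the complete graph K_{r₁} with the disjoint union K_{r₂} ⊔ K_{r₃} of two complete graphs. Then the eccentricity matrix ε(H₁) has exactly one positive eigenvalue. -/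
open Finset Polynomial

/-!
The eccentricity matrix of `K_α ∨ (K_β ⊔ K_γ)` is `J - (D + σ σᵀ)`, where `J` is the all-ones
matrix, `D` the diagonal indicator of the central clique and `σ` the vector that is `0` on the
central clique, `1` on one leaf clique and `-1` on the other. Its quadratic form is therefore
nonpositive on the hyperplane orthogonal to the all-ones vector and positive at that vector, so by
the spectral theorem exactly one eigenvalue is positive.
-/

open Matrix

namespace Matrix.IsHermitian

variable {n : Type*} [Fintype n] [DecidableEq n] {A : Matrix n n ℝ} (hA : A.IsHermitian)

lemma exists_eigenvalues_pos_of_dotProduct_mulVec_pos {w : n → ℝ}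
    (hw : 0 < w ⬝ᵥ (A *ᵥ w)) : ∃ i, 0 < hA.eigenvalues i := by
  by_contra! h
  set U : Matrix n n ℝ := (hA.eigenvectorUnitary : Matrix n n ℝ)
  have hA' : -A = U * -diagonal hA.eigenvalues * Uᴴ := by
    conv_lhs => rw [hA.spectral_theorem]
    simp [U, star_eq_conjTranspose, -diagonal_neg]
  have hD : (-diagonal hA.eigenvalues).PosSemidef := by
    rw [diagonal_neg]
    exact posSemidef_diagonal_iff.mpr fun i => neg_nonneg.mpr (h i)
  have := (hA' ▸ hD.mul_mul_conjTranspose_same U).dotProduct_mulVec_nonneg w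
  simp only [star_trivial, neg_mulVec, dotProduct_neg, neg_nonneg] at this
  linarith

lemma eigenvectorBasis_dotProduct (i j : n) :
    ⇑(hA.eigenvectorBasis i) ⬝ᵥ ⇑(hA.eigenvectorBasis j) = if i = j then 1 else 0 := by
  rw [← orthonormal_iff_ite.mp hA.eigenvectorBasis.orthonormal i j,
    EuclideanSpace.inner_eq_star_dotProduct, dotProduct_comm]
  rfl

lemma dotProduct_mulVec_smul_add_smul {i j : n} (hij : i ≠ j) (a b : ℝ) :
    (a • ⇑(hA.eigenvectorBasis i) + b • ⇑(hA.eigenvectorBasis j)) ⬝ᵥ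
        (A *ᵥ (a • ⇑(hA.eigenvectorBasis i) + b • ⇑(hA.eigenvectorBasis j))) =
      hA.eigenvalues i * a ^ 2 + hA.eigenvalues j * b ^ 2 := by
  simp only [mulVec_add, mulVec_smul, mulVec_eigenvectorBasis, add_dotProduct, dotProduct_add,
    smul_dotProduct, dotProduct_smul, eigenvectorBasis_dotProduct, hij, hij.symm, if_true,
    if_false, smul_eq_mul]
  ring

lemma eq_of_eigenvalues_pos {w : n → ℝ}
    (hneg : ∀ x : n → ℝ, x ⬝ᵥ w = 0 → x ⬝ᵥ (A *ᵥ x) ≤ 0) {i j : n}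
    (hi : 0 < hA.eigenvalues i) (hj : 0 < hA.eigenvalues j) : i = j := by
  by_contra hij
  set u : n → ℝ := ⇑(hA.eigenvectorBasis i)
  set v : n → ℝ := ⇑(hA.eigenvectorBasis j)
  by_cases hu : u ⬝ᵥ w = 0
  · have hquad := hA.dotProduct_mulVec_smul_add_smul hij 1 0
    simp only [one_smul, zero_smul, add_zero] at hquad
    nlinarith [hneg u hu]
  · have hx : ((v ⬝ᵥ w) • u + (-(u ⬝ᵥ w)) • v) ⬝ᵥ w = 0 := by
      simp only [add_dotProduct, smul_dotProduct, smul_eq_mul]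
      ring
    have hquad := hneg _ hx
    rw [hA.dotProduct_mulVec_smul_add_smul hij] at hquad
    have : 0 < (u ⬝ᵥ w) ^ 2 := by positivity
    nlinarith [sq_nonneg (v ⬝ᵥ w)]

lemma posEigCount_eq_one {w : n → ℝ} (hw : 0 < w ⬝ᵥ (A *ᵥ w))
    (hneg : ∀ x : n → ℝ, x ⬝ᵥ w = 0 → x ⬝ᵥ (A *ᵥ x) ≤ 0) : posEigCount hA = 1 := by
  obtain ⟨i, hi⟩ := hA.exists_eigenvalues_pos_of_dotProduct_mulVec_pos hw
  rw [posEigCount, Finset.card_eq_one]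
  refine ⟨i, Finset.eq_singleton_iff_unique_mem.mpr ⟨by simpa using hi, fun j hj => ?_⟩⟩
  exact hA.eq_of_eigenvalues_pos hneg (by simpa using hj) hi

lemma posEigCount_eq_one_of_eq_vecMulVec_sub {w : n → ℝ} {N : Matrix n n ℝ}
    (hN : N.PosSemidef) (hAN : A = vecMulVec w w - N) (hw : 0 < w ⬝ᵥ (A *ᵥ w)) :
    posEigCount hA = 1 := by
  refine hA.posEigCount_eq_one hw fun x hx => ?_
  have := hN.dotProduct_mulVec_nonneg x
  simp only [star_trivial] at this
  rw [hAN, sub_mulVec, dotProduct_sub, vecMulVec_mulVec, dotProduct_comm w x, hx]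
  simpa using this

end Matrix.IsHermitian

lemma dotProduct_vecMulVec_mulVec {n R : Type*} [Fintype n] [CommSemiring R] (x u v y : n → R) :
    x ⬝ᵥ (vecMulVec u v *ᵥ y) = (x ⬝ᵥ u) * (v ⬝ᵥ y) := by
  rw [vecMulVec_mulVec, op_smul_eq_smul, dotProduct_smul, smul_eq_mul, mul_comm]

namespace SimpleGraph

variable {V : Type*} {G : SimpleGraph V} {u v w c : V}

lemma dist_le_one_of_forall_adj (hc : ∀ v, v ≠ c → G.Adj c v) (v : V) : G.dist c v ≤ 1 := by
  rcases eq_or_ne v c with rfl | hv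
  · simp
  · exact (dist_eq_one_iff_adj.mpr (hc v hv)).le

lemma dist_le_two_of_forall_adj (hc : ∀ v, v ≠ c → G.Adj c v) (u v : V) : G.dist u v ≤ 2 := by
  have hcv : G.Reachable c v := by
    rcases eq_or_ne v c with rfl | hv
    · rfl
    · exact (hc v hv).reachable
  calc G.dist u v ≤ G.dist u c + G.dist c v := hcv.dist_triangle_right u
    _ = G.dist c u + G.dist c v := by rw [dist_comm]
    _ ≤ 1 + 1 := add_le_add (dist_le_one_of_forall_adj hc u) (dist_le_one_of_forall_adj hc v)

lemma dist_eq_two_of_adj_of_adj (hne : u ≠ v) (hnadj : ¬G.Adj u v) (huw : G.Adj u w)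
    (hwv : G.Adj w v) : G.dist u v = 2 := by
  rw [dist, edist_eq_two_iff.mpr ⟨hne, hnadj, w, huw, hwv.symm⟩]
  rfl

end SimpleGraph

lemma ecc_eq_of_forall_dist_le {V : Type*} [Fintype V] {G : SimpleGraph V} {u : V} {k : ℕ}
    (hle : ∀ v, G.dist u v ≤ k) {v : V} (hv : G.dist u v = k) : ecc G u = k :=
  le_antisymm (Finset.sup_le fun v _ => hle v) (hv ▸ Finset.le_sup (Finset.mem_univ v))

section graphJoin

variable {α β : Type*} {G : SimpleGraph α} {H : SimpleGraph β}

@[simp] lemma graphJoin_adj_inl_inl {a a' : α} :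
    (graphJoin G H).Adj (.inl a) (.inl a') ↔ G.Adj a a' := Iff.rfl

@[simp] lemma graphJoin_adj_inr_inr {b b' : β} :
    (graphJoin G H).Adj (.inr b) (.inr b') ↔ H.Adj b b' := Iff.rfl

@[simp] lemma graphJoin_adj_inl_inr (a : α) (b : β) : (graphJoin G H).Adj (.inl a) (.inr b) :=
  trivial

@[simp] lemma graphJoin_adj_inr_inl (a : α) (b : β) : (graphJoin G H).Adj (.inr b) (.inl a) :=
  trivial

@[simp] lemma graphSum_adj_inl_inl {a a' : α} :
    (graphSum G H).Adj (.inl a) (.inl a') ↔ G.Adj a a' := Iff.rfl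

@[simp] lemma graphSum_adj_inr_inr {b b' : β} :
    (graphSum G H).Adj (.inr b) (.inr b') ↔ H.Adj b b' := Iff.rfl

@[simp] lemma graphSum_not_adj_inl_inr (a : α) (b : β) : ¬(graphSum G H).Adj (.inl a) (.inr b) :=
  not_false

@[simp] lemma graphSum_not_adj_inr_inl (a : α) (b : β) : ¬(graphSum G H).Adj (.inr b) (.inl a) :=
  not_false

end graphJoin

abbrev cliqueStar (α β γ : Type*) : SimpleGraph (α ⊕ (β ⊕ γ)) :=
  graphJoin (⊤ : SimpleGraph α) (graphSum (⊤ : SimpleGraph β) (⊤ : SimpleGraph γ))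

section cliqueStar

variable {α β γ : Type*}

lemma cliqueStar_adj_inl {a : α} {v : α ⊕ (β ⊕ γ)} (hv : v ≠ .inl a) :
    (cliqueStar α β γ).Adj (.inl a) v := by
  rcases v with a' | x
  · simpa [eq_comm] using hv
  · simp

lemma cliqueStar_dist_le_two [Nonempty α] (u v : α ⊕ (β ⊕ γ)) :
    (cliqueStar α β γ).dist u v ≤ 2 :=
  SimpleGraph.dist_le_two_of_forall_adj (c := .inl (Classical.arbitrary α))
    (fun _ => cliqueStar_adj_inl) u v

lemma cliqueStar_dist_inr_inl_inr_inr [Nonempty α] (b : β) (c : γ) :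
    (cliqueStar α β γ).dist (.inr (.inl b)) (.inr (.inr c)) = 2 :=
  SimpleGraph.dist_eq_two_of_adj_of_adj (by simp) (by simp) (w := .inl (Classical.arbitrary α))
    (by simp) (by simp)

lemma cliqueStar_dist_inr_inr_inr_inl [Nonempty α] (b : β) (c : γ) :
    (cliqueStar α β γ).dist (.inr (.inr c)) (.inr (.inl b)) = 2 :=
  SimpleGraph.dist_comm.trans (cliqueStar_dist_inr_inl_inr_inr b c)

variable [Fintype α] [Fintype β] [Fintype γ]

lemma cliqueStar_ecc_inl [Nonempty β] (a : α) : ecc (cliqueStar α β γ) (.inl a) = 1 :=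
  ecc_eq_of_forall_dist_le (SimpleGraph.dist_le_one_of_forall_adj (fun _ => cliqueStar_adj_inl))
    (v := .inr (.inl (Classical.arbitrary β))) (SimpleGraph.dist_eq_one_iff_adj.mpr (by simp))

lemma cliqueStar_ecc_inr [Nonempty α] [Nonempty β] [Nonempty γ] (x : β ⊕ γ) :
    ecc (cliqueStar α β γ) (.inr x) = 2 := by
  rcases x with b | c
  · exact ecc_eq_of_forall_dist_le (cliqueStar_dist_le_two _)
      (cliqueStar_dist_inr_inl_inr_inr b (Classical.arbitrary γ))
  · exact ecc_eq_of_forall_dist_le (cliqueStar_dist_le_two _)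
      (cliqueStar_dist_inr_inr_inr_inl (Classical.arbitrary β) c)

variable [DecidableEq α] [DecidableEq β] [DecidableEq γ] [Nonempty α] [Nonempty β] [Nonempty γ]

lemma eccMatrix_cliqueStar :
    eccMatrix (cliqueStar α β γ) = vecMulVec 1 1 - (diagonal (Sum.elim 1 0) +
      vecMulVec (Sum.elim 0 (Sum.elim 1 (-1))) (Sum.elim 0 (Sum.elim 1 (-1)))) := by
  ext u v
  rcases eq_or_ne u v with rfl | huv
  · rcases u with a | b | c <;> simp [eccMatrix, vecMulVec]
  by_cases hadj : (cliqueStar α β γ).Adj u v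
  · rw [eccMatrix, SimpleGraph.dist_eq_one_iff_adj.mpr hadj]
    rcases u with a | b | c <;> rcases v with a' | b' | c' <;>
      simp_all [cliqueStar_ecc_inl, cliqueStar_ecc_inr, vecMulVec]
  · rcases u with a | b | c <;> rcases v with a' | b' | c' <;>
      simp_all [eccMatrix, cliqueStar_ecc_inr, vecMulVec, cliqueStar_dist_inr_inl_inr_inr,
        cliqueStar_dist_inr_inr_inr_inl, one_add_one_eq_two]

lemma one_dotProduct_eccMatrix_cliqueStar_mulVec_one_pos :
    0 < 1 ⬝ᵥ (eccMatrix (cliqueStar α β γ) *ᵥ 1) := by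
  rw [eccMatrix_cliqueStar, sub_mulVec, add_mulVec, dotProduct_sub, dotProduct_add,
    dotProduct_vecMulVec_mulVec, dotProduct_vecMulVec_mulVec, one_dotProduct_one]
  simp only [mulVec_diagonal, one_dotProduct, dotProduct_one, Fintype.sum_sum_type,
    Fintype.card_sum, Sum.elim_inl, Sum.elim_inr, Pi.one_apply, Pi.zero_apply, Pi.neg_apply,
    mul_one, Finset.sum_const, Finset.card_univ, nsmul_eq_mul]
  have hα : (1 : ℝ) ≤ Fintype.card α := by exact_mod_cast Fintype.card_pos
  have hβ : (1 : ℝ) ≤ Fintype.card β := by exact_mod_cast Fintype.card_pos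
  have hγ : (1 : ℝ) ≤ Fintype.card γ := by exact_mod_cast Fintype.card_pos
  push_cast
  nlinarith [mul_le_mul hβ hγ zero_le_one (by linarith)]

theorem posEigCount_eccMatrix_cliqueStar :
    posEigCount (eccMatrix_isHermitian (cliqueStar α β γ)) = 1 := by
  refine (eccMatrix_isHermitian _).posEigCount_eq_one_of_eq_vecMulVec_sub ?_
    eccMatrix_cliqueStar one_dotProduct_eccMatrix_cliqueStar_mulVec_one_pos
  refine (posSemidef_diagonal_iff.mpr ?_).add (posSemidef_vecMulVec_self_star _)
  rintro (a | x) <;> simp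

end cliqueStar

/-- the join of `K_{r₁}` with `K_{r₂} ⊔ K_{r₃}` has exactly one positive
eccentricity eigenvalue. -/
theorem stmt9 (r₁ r₂ r₃ : ℕ) (h1 : 1 ≤ r₁) (h2 : 1 ≤ r₂) (h3 : 1 ≤ r₃) :
    posEigCount (eccMatrix_isHermitian (graphJoin (⊤ : SimpleGraph (Fin r₁))
      (graphSum (⊤ : SimpleGraph (Fin r₂)) (⊤ : SimpleGraph (Fin r₃))))) = 1 := by
  have := Fin.pos_iff_nonempty.mp h1
  have := Fin.pos_iff_nonempty.mp h2
  have := Fin.pos_iff_nonempty.mp h3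
  exact posEigCount_eccMatrix_cliqueStar
end
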